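/- arXiv:1406.5345 — 2 statements merged into one kernel-verified Lean document; each statement's English description precedes it below -/
import Mathlib

section
/- For every positive integer n, B_{2n} = (2n / (2^(2n) * (2^(2n) - 1))) * sum over k from 0 to n-1 of binomial(2n-1, 2k) * E_{2k}, where B_{2n} is the (2n)-th Bernoulli number and E_{2k} is the (2k)-th Euler number. -/
/-! With `B(t) = t / (eᵗ - 1)`, one has `B(4t) - B(2t) + 2t = 2t e²ᵗ / (e²ᵗ + 1) = t eᵗ sech t`.
The coefficient of `t²ⁿ` on the left is `(4²ⁿ - 2²ⁿ) B₂ₙ / (2n)!`, and on the right it is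
`∑ₖ C(2n-1, k) Eₖ / (2n-1)!`, in which only even `k` contribute because `sech` is even.
That the Taylor series of `sech` is a formal inverse of the series of `cosh` follows from the
Leibniz rule applied to `sech · cosh = 1`. -/

/-- The Euler numbers, defined via the generating function `1 / cosh t = ∑ Eₙ tⁿ / n!`,
i.e. as derivatives of `1 / cosh` at `0`. -/
noncomputable def eulerNumber (n : ℕ) : ℝ :=
  iteratedDeriv n (fun t : ℝ => 1 / Real.cosh t) 0

open Finset PowerSeries
open scoped Nat

theorem Finset.sum_range_two_mul {M : Type*} [AddCommMonoid M] (f : ℕ → M) (n : ℕ) :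
    ∑ i ∈ range (2 * n), f i = ∑ i ∈ range n, (f (2 * i) + f (2 * i + 1)) := by
  induction n with
  | zero => simp
  | succ n ih => rw [Nat.mul_succ, sum_range_succ, sum_range_succ, sum_range_succ, ih, add_assoc]

section SeriesIdentity

variable (K : Type*) [Field K] [CharZero K]

namespace PowerSeries

variable {K} in
theorem coeff_mk_div_factorial_mul (a b : ℕ → K) (n : ℕ) :
    coeff n ((mk fun k => a k / k !) * mk fun k => b k / k !) =
      (∑ k ∈ range (n + 1), n.choose k * a k * b (n - k)) / n ! := by
  rw [coeff_mul, Nat.sum_antidiagonal_eq_sum_range_succ_mk, sum_div]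
  refine sum_congr rfl fun k hk => ?_
  have : (n ! : K) ≠ 0 := Nat.cast_ne_zero.mpr n.factorial_ne_zero
  simp only [coeff_mk, Nat.cast_choose K (Nat.lt_succ_iff.mp (mem_range.mp hk))]
  field_simp

theorem exp_eq_mk : exp K = mk fun n => (1 : K) / n ! := by
  ext n
  simp [coeff_exp]

noncomputable def cosh : K⟦X⟧ := mk fun n => (if Even n then 1 else 0) / n !

theorem two_mul_cosh : 2 * cosh K = exp K + rescale (-1) (exp K) := by
  ext n
  obtain h | h := Nat.even_or_odd n
  · simp [cosh, coeff_exp, coeff_rescale, h, h.neg_one_pow, ← map_ofNat C, coeff_C_mul]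
    ring
  · simp [cosh, coeff_exp, coeff_rescale, h.neg_one_pow, ← map_ofNat C, coeff_C_mul,
      Nat.not_even_iff_odd.mpr h]

end PowerSeries

theorem bernoulliPowerSeries_eq_mk :
    bernoulliPowerSeries K = mk fun n => (bernoulli n : K) / n ! := by
  ext n
  simp [bernoulliPowerSeries]

theorem rescale_bernoulliPowerSeries_mul (k : ℕ) :
    rescale (k : K) (bernoulliPowerSeries K) * (exp K ^ k - 1) = (k : K⟦X⟧) * X := by
  have h := congrArg (rescale (k : K)) (bernoulliPowerSeries_mul_exp_sub_one K)
  rwa [map_mul, map_sub, map_one, rescale_X, ← exp_pow_eq_rescale_exp, map_natCast] at h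

theorem X_mul_exp_eq_mul_cosh :
    X * exp K = (rescale 4 (bernoulliPowerSeries K) - rescale 2 (bernoulliPowerSeries K)
      + 2 * X) * cosh K := by
  have h2 := rescale_bernoulliPowerSeries_mul K 2
  have h4 := rescale_bernoulliPowerSeries_mul K 4
  have hinv : exp K * rescale (-1) (exp K) = 1 := exp_mul_exp_neg_eq_one
  have hcosh := two_mul_cosh K
  push_cast at h2 h4
  set B := bernoulliPowerSeries K
  set e := exp K
  set e' := rescale (-1) e
  have htwo : (2 : K⟦X⟧) ≠ 0 := fun h => by simpa [map_ofNat] using congrArg constantCoeff h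
  have hsq : e ^ 2 - 1 ≠ 0 := right_ne_zero_of_mul (h2 ▸ mul_ne_zero htwo X_ne_zero)
  have hB4 : rescale 4 B * (e ^ 2 + 1) = 2 * rescale 2 B :=
    mul_right_cancel₀ hsq (by linear_combination h4 - 2 * h2)
  -- with `P` the bracket, `hB4` and `h2` give `2X e² = P (e² + 1)`; then multiply by `e' = e⁻¹`
  refine mul_left_cancel₀ htwo ?_
  linear_combination (-(rescale 4 B - rescale 2 B + 2 * X)) * hcosh - e' * (hB4 - h2)
    + ((rescale 4 B - rescale 2 B + 2 * X) * e - 2 * X * e) * hinv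

end SeriesIdentity

theorem Real.iteratedDeriv_cosh_zero (n : ℕ) :
    iteratedDeriv n Real.cosh 0 = if Even n then 1 else 0 := by
  obtain ⟨k, rfl | rfl⟩ := Nat.even_or_odd' n <;> simp

theorem sum_choose_mul_eulerNumber_mul_ite_even (n : ℕ) :
    ∑ k ∈ range (n + 1), n.choose k * eulerNumber k * (if Even (n - k) then 1 else 0) =
      if n = 0 then 1 else 0 := by
  have hsech : ContDiff ℝ n fun t => 1 / Real.cosh t :=
    contDiff_const.div Real.contDiff_cosh fun t => (Real.cosh_pos t).ne'
  have h := iteratedDeriv_fun_mul (x := 0) hsech.contDiffAt Real.contDiff_cosh.contDiffAt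
  simp only [one_div, inv_mul_cancel₀ (Real.cosh_pos _).ne', iteratedDeriv_const] at h
  simpa [eulerNumber, Real.iteratedDeriv_cosh_zero] using h.symm

theorem eulerNumber_eq_zero_of_odd {n : ℕ} (hn : Odd n) : eulerNumber n = 0 := by
  have h := iteratedDeriv_comp_neg n (fun t : ℝ => 1 / Real.cosh t) 0
  simp only [Real.cosh_neg, neg_zero, hn.neg_one_pow, smul_eq_mul, neg_one_mul] at h
  rw [eulerNumber]
  linarith

noncomputable def sechSeries : ℝ⟦X⟧ := mk fun n => eulerNumber n / n !

theorem sechSeries_mul_cosh : sechSeries * cosh ℝ = 1 := by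
  ext n
  rw [sechSeries, cosh, coeff_mk_div_factorial_mul, sum_choose_mul_eulerNumber_mul_ite_even,
    coeff_one]
  split_ifs <;> simp_all

theorem succ_mul_sum_choose_mul_eulerNumber {n : ℕ} (hn : n ≠ 0) :
    ((n + 1 : ℕ) : ℝ) * ∑ k ∈ range (n + 1), (n.choose k : ℝ) * eulerNumber k =
      (4 ^ (n + 1) - 2 ^ (n + 1)) * bernoulli (n + 1) := by
  have hseries : X * (sechSeries * exp ℝ) =
      rescale 4 (bernoulliPowerSeries ℝ) - rescale 2 (bernoulliPowerSeries ℝ) + 2 * X := by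
    rw [mul_left_comm, X_mul_exp_eq_mul_cosh, mul_left_comm, sechSeries_mul_cosh, mul_one]
  have h := congrArg (coeff (n + 1)) hseries
  rw [coeff_succ_X_mul, sechSeries, exp_eq_mk, coeff_mk_div_factorial_mul, map_add, map_sub,
    coeff_rescale, coeff_rescale, bernoulliPowerSeries_eq_mk, coeff_mk, ← map_ofNat C,
    coeff_C_mul, coeff_X, if_neg (by omega), Nat.factorial_succ] at h
  field_simp at h
  push_cast at h ⊢
  refine mul_right_cancel₀ (by positivity : (n ! : ℝ) ≠ 0) ?_
  linear_combination h

theorem bernoulli_eq_sum_euler (n : ℕ) (hn : 0 < n) :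
    (bernoulli (2 * n) : ℝ) =
      (2 * n / (2 ^ (2 * n) * (2 ^ (2 * n) - 1))) *
        ∑ k ∈ Finset.range n, (Nat.choose (2 * n - 1) (2 * k) : ℝ) * eulerNumber (2 * k) := by
  have h := succ_mul_sum_choose_mul_eulerNumber (n := 2 * n - 1) (by omega)
  rw [Nat.sub_add_cancel (by omega), sum_range_two_mul] at h
  simp only [eulerNumber_eq_zero_of_odd (odd_two_mul_add_one _), mul_zero, add_zero] at h
  have h4 : (4 : ℝ) ^ (2 * n) = (2 ^ (2 * n)) ^ 2 := by
    rw [show (4 : ℝ) = 2 ^ 2 by norm_num, ← pow_mul, ← pow_mul, mul_comm]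
  have hq₀ : (2 : ℝ) ^ (2 * n) ≠ 0 := by positivity
  have hq : (2 : ℝ) ^ (2 * n) - 1 ≠ 0 := (sub_pos.mpr (one_lt_pow₀ one_lt_two (by omega))).ne'
  rw [h4] at h
  generalize (2 : ℝ) ^ (2 * n) = q at h hq hq₀ ⊢
  field_simp
  push_cast at h
  linear_combination -h
end

section
/- Define polynomials p_n by p_0(x) = 1 and p_{n+1}(x) = x^2 * p_n''(x) + x*(1 - 2x) * p_n'(x) - x * p_n(x). Then for every n >= 1, p_n''(0) = 2 * (2^(2(n-1)) - 1). -/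
/-!
Writing `θ = X · d/dX` for the Euler operator, the recurrence reads
`p_{n+1} = θ²pₙ - X (2θpₙ + pₙ)`, and since `θ` multiplies the coefficient of `Xᵏ` by `k`, the
coefficients `a_{n,k}` of `pₙ` satisfy `a_{n+1,0} = 0` and
`a_{n+1,k+1} = (k+1)² a_{n,k+1} - (2k+1) a_{n,k}`.
Hence `a_{n+1,1} = -1` and `a_{n+2,2} = 4 a_{n+1,2} + 3`, so `a_{n,2} = 4^(n-1) - 1`,
and `pₙ''(0) = 2 a_{n,2}`.
-/

open Polynomial

/-- The Sheffer-type polynomial sequence `p₀ = 1`,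
`p_{n+1}(x) = x² pₙ″(x) + x(1 - 2x) pₙ′(x) - x pₙ(x)`. -/
noncomputable def KLpoly : ℕ → Polynomial ℤ
  | 0 => 1
  | n + 1 =>
      X ^ 2 * derivative (derivative (KLpoly n)) +
        X * (1 - 2 * X) * derivative (KLpoly n) - X * KLpoly n

namespace Polynomial

variable {R : Type*} [CommSemiring R]

theorem coeff_X_mul_derivative (p : R[X]) (k : ℕ) :
    (X * derivative p).coeff k = k * p.coeff k := by
  cases k with
  | zero => simp
  | succ k => rw [coeff_X_mul, coeff_derivative, mul_comm, Nat.cast_succ]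

theorem eval_zero_derivative_derivative (p : R[X]) :
    (derivative (derivative p)).eval 0 = 2 * p.coeff 2 := by
  rw [← coeff_zero_eq_eval_zero, coeff_derivative, coeff_derivative]
  norm_num
  ring

end Polynomial

theorem KLpoly_succ_eq (n : ℕ) :
    KLpoly (n + 1) = X * derivative (X * derivative (KLpoly n)) -
      X * (2 * (X * derivative (KLpoly n)) + KLpoly n) := by
  rw [KLpoly, derivative_mul, derivative_X]
  ring

theorem KLpoly_succ_coeff_zero (n : ℕ) : (KLpoly (n + 1)).coeff 0 = 0 := by
  simp [KLpoly_succ_eq]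

theorem KLpoly_succ_coeff_succ (n k : ℕ) :
    (KLpoly (n + 1)).coeff (k + 1) =
      (k + 1) ^ 2 * (KLpoly n).coeff (k + 1) - (2 * k + 1) * (KLpoly n).coeff k := by
  rw [KLpoly_succ_eq, coeff_sub, coeff_X_mul_derivative, coeff_X_mul_derivative, coeff_X_mul,
    coeff_add, coeff_ofNat_mul, coeff_X_mul_derivative]
  push_cast
  ring

theorem KLpoly_succ_coeff_one (n : ℕ) : (KLpoly (n + 1)).coeff 1 = -1 := by
  induction n with
  | zero => simp [KLpoly]
  | succ n ih => rw [KLpoly_succ_coeff_succ, ih, KLpoly_succ_coeff_zero]; norm_num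

-- At `n = 0` the truncated `n - 1` makes both sides `0`.
theorem KLpoly_coeff_two (n : ℕ) : (KLpoly n).coeff 2 = 4 ^ (n - 1) - 1 := by
  induction n with
  | zero => simp [KLpoly, coeff_one]
  | succ n ih =>
    rw [KLpoly_succ_coeff_succ]
    cases n with
    | zero => simp [KLpoly, coeff_one]
    | succ n =>
      rw [ih, KLpoly_succ_coeff_one]
      simp only [Nat.add_sub_cancel, pow_succ]
      push_cast
      ring

theorem KLpoly_second_deriv_eval_zero_general (n : ℕ) :
    (derivative (derivative (KLpoly n))).eval 0 = 2 * (2 ^ (2 * (n - 1)) - 1) := by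
  rw [eval_zero_derivative_derivative, KLpoly_coeff_two, pow_mul]
  norm_num

theorem KLpoly_second_deriv_eval_zero (n : ℕ) (hn : 1 ≤ n) :
    (derivative (derivative (KLpoly n))).eval 0 = 2 * (2 ^ (2 * (n - 1)) - 1) :=
  KLpoly_second_deriv_eval_zero_general n
end
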